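/- With Delsarte's setup and q−1 dividing no m_{ji}: Σ over all nontrivial additive characters ψ of K of Σ_{x ∈ (K^×)^s} ψ(F(x)) equals (q−1)^{s−r+1} Σ_{χ ∈ G̃*} χ̄(a) 𝒢₀(χ), where G̃* consists of characters of (K^×)^r trivial on the image of the monomial map whose component product χ₁⋯χ_r is trivial. -/

import Mathlib

open Classical Finset

noncomputable instance (G : Type*) [CommGroup G] [Finite G] : Fintype (G →* ℂˣ) :=
  Fintype.ofInjective
    (fun χ : G →* ℂˣ => AddChar.toMonoidHomEquiv.symm
      ((Units.coeHom ℂ).comp (χ.comp (MulEquiv.multiplicativeAdditive G).toMonoidHom)))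
    (by
      intro χ₁ χ₂ h
      ext g
      have := congrArg (fun ψ => AddChar.toMonoidHomEquiv ψ
        (Multiplicative.ofAdd (Additive.ofMul g))) h
      simpa using this)

noncomputable instance (K : Type*) [Field K] [Fintype K] : Fintype (MulChar K ℂ) :=
  Fintype.ofEquiv _ MulChar.equivToUnitHom.symm

/-- Delsarte's monomial ("Veronese") map `phi(x) i = ∏ j, x j ^ m j i`. -/
def monomialMap (K : Type*) [Field K] (s r : ℕ) (m : Fin s → Fin r → ℕ) :
    (Fin s → Kˣ) →* (Fin r → Kˣ) where
  toFun x := fun i => ∏ j, x j ^ m j i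
  map_one' := by funext i; simp
  map_mul' x y := by funext i; simp [mul_pow, Finset.prod_mul_distrib]

section DualAux

variable (G : Type*) [CommGroup G]

noncomputable def dualEquivAddChar : (G →* ℂˣ) ≃ AddChar (Additive G) ℂ where
  toFun χ := AddChar.toMonoidHomEquiv.symm
      ((Units.coeHom ℂ).comp (χ.comp (MulEquiv.multiplicativeAdditive G).toMonoidHom))
  invFun ψ := ((AddChar.toMonoidHomEquiv ψ).comp
      (MulEquiv.multiplicativeAdditive G).symm.toMonoidHom).toHomUnits
  left_inv χ := by ext g; rfl
  right_inv ψ := by ext a; rfl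

lemma dualEquivAddChar_symm_apply (ψ : AddChar (Additive G) ℂ) (g : G) :
    (((dualEquivAddChar G).symm ψ g : ℂˣ) : ℂ) = ψ (Additive.ofMul g) := rfl

lemma sum_dual_apply_eq [Finite G] [Fintype (G →* ℂˣ)] (g : G) :
    ∑ χ : G →* ℂˣ, ((χ g : ℂˣ) : ℂ) = if g = 1 then (Nat.card G : ℂ) else 0 := by
  cases nonempty_fintype G
  rw [← Equiv.sum_comp (dualEquivAddChar G).symm (fun χ : G →* ℂˣ => ((χ g : ℂˣ) : ℂ))]
  simp only [dualEquivAddChar_symm_apply]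
  rw [AddChar.sum_apply_eq_ite]
  simp [Nat.card_eq_fintype_card]

lemma card_dual [Finite G] : Nat.card (G →* ℂˣ) = Nat.card G := by
  cases nonempty_fintype G
  rw [Nat.card_congr (dualEquivAddChar G)]
  rw [Nat.card_eq_fintype_card, Nat.card_eq_fintype_card]
  rw [AddChar.card_eq]
  exact Fintype.card_additive G

end DualAux
open Classical Finset

section FieldAux

variable {K : Type*} [Field K] [Fintype K]

lemma sum_K_eq_sum_units (f : K → ℂ) (h0 : f 0 = 0) :
    ∑ u : K, f u = ∑ u : Kˣ, f u := by
  rw [← Finset.sum_erase Finset.univ h0]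
  refine (Finset.sum_bij' (fun (u : K) (hu : u ∈ Finset.univ.erase 0) =>
      Units.mk0 u (Finset.ne_of_mem_erase hu))
      (fun (u : Kˣ) _ => (u : K)) ?_ ?_ ?_ ?_ ?_).symm.symm
  · intro u hu; exact Finset.mem_univ _
  · intro u _; exact Finset.mem_erase.mpr ⟨u.ne_zero, Finset.mem_univ _⟩
  · intro u hu; rfl
  · intro u _; exact Units.ext rfl
  · intro u hu; rfl

lemma mulChar_prod_apply {ι : Type*} (s : Finset ι) (χ : ι → MulChar K ℂ) (u : Kˣ) :
    (∏ i ∈ s, χ i) (u : K) = ∏ i ∈ s, χ i (u : K) := by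
  induction s using Finset.cons_induction with
  | empty => simp [MulChar.one_apply_coe]
  | cons a s ha ih => rw [Finset.prod_cons, Finset.prod_cons, MulChar.mul_apply, ih]

lemma mulChar_coe_ne_zero (χ : MulChar K ℂ) (u : Kˣ) : χ (u : K) ≠ 0 := by
  rw [← MulChar.coe_equivToUnitHom]
  exact Units.ne_zero _

lemma sum_inv_eval (η : MulChar K ℂ) :
    ∑ c : Kˣ, (η (c : K))⁻¹ = if η = 1 then ((Fintype.card K : ℂ) - 1) else 0 := by
  by_cases h : η = 1
  · subst h
    simp only [MulChar.one_apply_coe, inv_one, Finset.sum_const, Finset.card_univ, nsmul_eq_mul,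
      mul_one, Fintype.card_units]
    rw [if_true, Nat.cast_sub Fintype.card_pos, Nat.cast_one]
  · rw [if_neg h]
    have key : ∀ c : Kˣ, (η (c : K))⁻¹ = η ((c⁻¹ : Kˣ) : K) := by
      intro c
      have : η (c : K) * η ((c⁻¹ : Kˣ) : K) = 1 := by
        rw [← map_mul]
        norm_cast
        simp [MulChar.one_apply_coe]
      exact inv_eq_of_mul_eq_one_right this
    simp_rw [key]
    have hs := Equiv.sum_comp (Equiv.inv Kˣ) (fun c : Kˣ => η (c : K))
    simp only [Equiv.inv_apply] at hs
    rw [hs, ← sum_K_eq_sum_units (fun u => η u) (by simp [MulChar.map_nonunit])]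
    exact MulChar.sum_eq_zero_of_ne_one h

lemma gauss_shift (ψ₀ : AddChar K ℂ) (χ : MulChar K ℂ) (c b : Kˣ) :
    ∑ t : Kˣ, χ (t : K) * ψ₀ ((c : K) * ((b : K) * (t : K)))
      = (χ (b : K))⁻¹ * ((χ (c : K))⁻¹ * ∑ u : K, χ u * ψ₀ u) := by
  have h0 : (fun u : K => χ u * ψ₀ u) 0 = 0 := by simp [MulChar.map_nonunit]
  conv_rhs => rw [sum_K_eq_sum_units (fun u => χ u * ψ₀ u) h0]
  rw [← Equiv.sum_comp (Equiv.mulLeft (c * b)) (fun u : Kˣ => χ (u : K) * ψ₀ (u : K))]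
  simp only [Equiv.coe_mulLeft]
  have : ∀ t : Kˣ, χ (((c * b * t : Kˣ) : K)) * ψ₀ (((c * b * t : Kˣ) : K))
      = (χ (c : K) * χ (b : K)) * (χ (t : K) * ψ₀ ((c : K) * ((b : K) * (t : K)))) := by
    intro t
    push_cast
    rw [map_mul, map_mul]
    ring_nf
  simp_rw [this]
  rw [← Finset.mul_sum]
  field_simp [mulChar_coe_ne_zero χ c, mulChar_coe_ne_zero χ b]

end FieldAux


open Classical Finset

section Ann

variable {K : Type*} [Field K] [Fintype K] {r : ℕ} {A : Type*} [CommGroup A]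

/-- the product character attached to a tuple of multiplicative characters -/
noncomputable def tupleHom (χs : Fin r → MulChar K ℂ) : (Fin r → Kˣ) →* ℂˣ :=
  ∏ i, (MulChar.equivToUnitHom (χs i)).comp (Pi.evalMonoidHom (fun _ => Kˣ) i)

lemma tupleHom_apply (χs : Fin r → MulChar K ℂ) (y : Fin r → Kˣ) :
    ((tupleHom χs y : ℂˣ) : ℂ) = ∏ i, χs i ((y i : Kˣ) : K) := by
  rw [tupleHom, MonoidHom.finset_prod_apply]
  push_cast
  refine Finset.prod_congr rfl fun i _ => ?_
  simp [MulChar.coe_equivToUnitHom]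

noncomputable def annEquiv (φ : A →* (Fin r → Kˣ)) :
    {χs : Fin r → MulChar K ℂ // ∀ x : A, ∏ i, χs i ((φ x i : Kˣ) : K) = 1}
      ≃ (((Fin r → Kˣ) ⧸ φ.range) →* ℂˣ) where
  toFun χs := QuotientGroup.lift φ.range (tupleHom χs.1)
    (by
      intro z hz
      obtain ⟨x, rfl⟩ := MonoidHom.mem_range.mp hz
      ext
      rw [tupleHom_apply, χs.2 x, Units.val_one])
  invFun ψ :=
    ⟨fun i => MulChar.equivToUnitHom.symm
        (ψ.comp ((QuotientGroup.mk' φ.range).comp (MonoidHom.mulSingle (fun _ => Kˣ) i))),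
     by
      intro x
      set u : (Fin r → Kˣ) →* ℂˣ := ψ.comp (QuotientGroup.mk' φ.range) with hu
      have h1 : ∀ i : Fin r,
          MulChar.equivToUnitHom.symm
              (ψ.comp ((QuotientGroup.mk' φ.range).comp (MonoidHom.mulSingle (fun _ => Kˣ) i)))
              ((φ x i : Kˣ) : K)
            = ((u (Pi.mulSingle i (φ x i)) : ℂˣ) : ℂ) := fun i =>
        MulChar.equivToUnitHom_symm_coe _ _
      simp only [h1]
      have h2 : (∏ i, u (Pi.mulSingle i (φ x i))) = 1 := by
        rw [← map_prod, Finset.univ_prod_mulSingle (φ x)]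
        have h3 : (QuotientGroup.mk (φ x) : (Fin r → Kˣ) ⧸ φ.range) = 1 :=
          (QuotientGroup.eq_one_iff _).mpr ⟨x, rfl⟩
        rw [hu, MonoidHom.comp_apply, QuotientGroup.mk'_apply, h3, map_one]
      calc ∏ i, ((u (Pi.mulSingle i (φ x i)) : ℂˣ) : ℂ)
          = (((∏ i, u (Pi.mulSingle i (φ x i))) : ℂˣ) : ℂ) := by norm_cast
        _ = 1 := by rw [h2, Units.val_one]⟩
  left_inv := by
    rintro ⟨χs, h⟩
    ext i : 2
    apply MulChar.equivToUnitHom.injective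
    rw [Equiv.apply_symm_apply]
    refine MonoidHom.ext fun u => Units.ext ?_
    simp only [MonoidHom.comp_apply, QuotientGroup.mk'_apply, MonoidHom.mulSingle_apply,
      QuotientGroup.lift_mk]
    rw [tupleHom_apply, MulChar.coe_equivToUnitHom]
    rw [Fintype.prod_eq_single i (fun j hj => by
      rw [Pi.mulSingle_eq_of_ne hj, Units.val_one, map_one])]
    rw [Pi.mulSingle_eq_same]
  right_inv := by
    intro ψ
    refine QuotientGroup.monoidHom_ext _ ?_
    refine MonoidHom.ext fun y => Units.ext ?_
    simp only [MonoidHom.comp_apply, QuotientGroup.mk'_apply, QuotientGroup.lift_mk]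
    rw [tupleHom_apply]
    set u : (Fin r → Kˣ) →* ℂˣ := ψ.comp (QuotientGroup.mk' φ.range) with hu
    have h1 : ∀ i : Fin r,
        MulChar.equivToUnitHom.symm
            (ψ.comp ((QuotientGroup.mk' φ.range).comp (MonoidHom.mulSingle (fun _ => Kˣ) i)))
            ((y i : Kˣ) : K)
          = ((u (Pi.mulSingle i (y i)) : ℂˣ) : ℂ) := fun i =>
      MulChar.equivToUnitHom_symm_coe _ _
    simp only [h1]
    have h2 : (∏ i, u (Pi.mulSingle i (y i))) = ψ (QuotientGroup.mk y) := by
      rw [← map_prod, Finset.univ_prod_mulSingle y, hu, MonoidHom.comp_apply,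
        QuotientGroup.mk'_apply]
    calc ∏ i, ((u (Pi.mulSingle i (y i)) : ℂˣ) : ℂ)
        = (((∏ i, u (Pi.mulSingle i (y i))) : ℂˣ) : ℂ) := by norm_cast
      _ = ((ψ (QuotientGroup.mk y) : ℂˣ) : ℂ) := by rw [h2]

lemma annEquiv_apply_mk (φ : A →* (Fin r → Kˣ))
    (χs : {χs : Fin r → MulChar K ℂ // ∀ x : A, ∏ i, χs i ((φ x i : Kˣ) : K) = 1})
    (y : Fin r → Kˣ) :
    ((annEquiv φ χs (QuotientGroup.mk y) : ℂˣ) : ℂ) = ∏ i, χs.1 i ((y i : Kˣ) : K) := by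
  rw [annEquiv]
  simp only [Equiv.coe_fn_mk, QuotientGroup.lift_mk]
  exact tupleHom_apply _ _

end Ann

section Ann2

variable {K : Type*} [Field K] [Fintype K] {r : ℕ} {A : Type*} [CommGroup A] [Fintype A]

set_option maxHeartbeats 1000000 in
lemma ann_card (φ : A →* (Fin r → Kˣ)) :
    ((Finset.univ.filter (fun χs : Fin r → MulChar K ℂ =>
        ∀ x : A, ∏ i, χs i ((φ x i : Kˣ) : K) = 1)).card : ℕ)
      = Nat.card ((Fin r → Kˣ) ⧸ φ.range) := by
  calc (Finset.univ.filter (fun χs : Fin r → MulChar K ℂ =>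
        ∀ x : A, ∏ i, χs i ((φ x i : Kˣ) : K) = 1)).card
      = Fintype.card {χs : Fin r → MulChar K ℂ //
          ∀ x : A, ∏ i, χs i ((φ x i : Kˣ) : K) = 1} := (Fintype.card_subtype _).symm
    _ = Nat.card {χs : Fin r → MulChar K ℂ //
          ∀ x : A, ∏ i, χs i ((φ x i : Kˣ) : K) = 1} := (Nat.card_eq_fintype_card).symm
    _ = Nat.card (((Fin r → Kˣ) ⧸ φ.range) →* ℂˣ) := Nat.card_congr (annEquiv φ)
    _ = Nat.card ((Fin r → Kˣ) ⧸ φ.range) := card_dual (((Fin r → Kˣ)) ⧸ φ.range)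

lemma ann_sum (φ : A →* (Fin r → Kˣ)) (y : Fin r → Kˣ) :
    ∑ χs ∈ Finset.univ.filter (fun χs : Fin r → MulChar K ℂ =>
        ∀ x : A, ∏ i, χs i ((φ x i : Kˣ) : K) = 1),
      ∏ i, χs i ((y i : Kˣ) : K)
    = if y ∈ Finset.univ.image ⇑φ then
        (((Finset.univ.filter (fun χs : Fin r → MulChar K ℂ =>
          ∀ x : A, ∏ i, χs i ((φ x i : Kˣ) : K) = 1)).card : ℕ) : ℂ) else 0 := by
  rw [Finset.sum_subtype (p := fun χs : Fin r → MulChar K ℂ =>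
      ∀ x : A, ∏ i, χs i ((φ x i : Kˣ) : K) = 1) (Finset.univ.filter _)
    (fun χs => by simp only [Finset.mem_filter, Finset.mem_univ, true_and])
    (fun χs : Fin r → MulChar K ℂ => ∏ i, χs i ((y i : Kˣ) : K))]
  have key : ∀ χs : {χs : Fin r → MulChar K ℂ //
      ∀ x : A, ∏ i, χs i ((φ x i : Kˣ) : K) = 1},
      ∏ i, χs.1 i ((y i : Kˣ) : K)
        = ((annEquiv φ χs (QuotientGroup.mk y) : ℂˣ) : ℂ) :=
    fun χs => (annEquiv_apply_mk φ χs y).symm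
  rw [Finset.sum_congr rfl fun χs _ => key χs]
  letI instD : Fintype (((Fin r → Kˣ) ⧸ φ.range) →* ℂˣ) := Fintype.ofEquiv _ (annEquiv φ)
  have h4 := Equiv.sum_comp (annEquiv φ)
    (fun ψ : ((Fin r → Kˣ) ⧸ φ.range) →* ℂˣ => ((ψ (QuotientGroup.mk y) : ℂˣ) : ℂ))
  refine Eq.trans h4 ?_
  refine Eq.trans (@sum_dual_apply_eq ((Fin r → Kˣ) ⧸ φ.range) _ _ instD (QuotientGroup.mk y)) ?_
  rw [← ann_card φ]
  congr 1
  rw [eq_iff_iff, QuotientGroup.eq_one_iff]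
  simp [MonoidHom.mem_range, eq_comm]

lemma range_card_eq_image (φ : A →* (Fin r → Kˣ)) :
    Nat.card φ.range = (Finset.univ.image ⇑φ).card := by
  have h : (φ.range : Set (Fin r → Kˣ)) = ↑(Finset.univ.image ⇑φ) := by
    ext b; simp [eq_comm]
  calc Nat.card φ.range = Nat.card (φ.range : Set (Fin r → Kˣ)) := rfl
    _ = Nat.card ↑(Finset.univ.image ⇑φ : Set (Fin r → Kˣ)) := by rw [h]
    _ = (Finset.univ.image ⇑φ).card := by
        rw [Nat.card_coe_set_eq, Set.ncard_coe_finset]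

lemma quotient_card_mul (φ : A →* (Fin r → Kˣ)) :
    Nat.card ((Fin r → Kˣ) ⧸ φ.range) * (Finset.univ.image ⇑φ).card
      = Fintype.card (Fin r → Kˣ) := by
  rw [← range_card_eq_image φ, ← Subgroup.card_eq_card_quotient_mul_card_subgroup,
    Nat.card_eq_fintype_card]

end Ann2

section Fiber

variable {A B : Type*} [Group A] [Fintype A] [CommGroup B] [DecidableEq B]

lemma fiber_card (φ : A →* B) {b : B} (hb : b ∈ Finset.univ.image ⇑φ) :
    (Finset.univ.filter (fun x : A => φ x = b)).card
      = (Finset.univ.filter (fun x : A => φ x = 1)).card := by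
  obtain ⟨x₀, _, hx₀⟩ := Finset.mem_image.mp hb
  refine Finset.card_bij' (fun x _ => x₀⁻¹ * x) (fun x _ => x₀ * x) ?_ ?_ ?_ ?_
  · intro x hx
    simp only [Finset.mem_filter, Finset.mem_univ, true_and] at hx ⊢
    rw [map_mul, map_inv, hx, hx₀, inv_mul_cancel]
  · intro x hx
    simp only [Finset.mem_filter, Finset.mem_univ, true_and] at hx ⊢
    rw [map_mul, hx, mul_one, hx₀]
  · intro x _; group
  · intro x _; group

lemma sum_comp_fiber (φ : A →* B) (f : B → ℂ) :
    ∑ x : A, f (φ x)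
      = (Finset.univ.filter (fun x : A => φ x = 1)).card •
          ∑ b ∈ Finset.univ.image ⇑φ, f b := by
  rw [Finset.sum_comp f ⇑φ]
  rw [Finset.smul_sum]
  exact Finset.sum_congr rfl fun b hb => by rw [fiber_card φ hb]

lemma card_image_mul_fiber (φ : A →* B) :
    (Finset.univ.image ⇑φ).card * (Finset.univ.filter (fun x : A => φ x = 1)).card
      = Fintype.card A := by
  have h := Finset.card_eq_sum_card_image ⇑φ (Finset.univ : Finset A)
  rw [Finset.card_univ] at h
  rw [h, Finset.sum_congr rfl (fun b hb => fiber_card φ hb), Finset.sum_const, smul_eq_mul]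

end Fiber

section PsiEnum

variable {K : Type*} [Field K] [Fintype K]

lemma mulShift_units_injective {ψ₀ : AddChar K ℂ} (hψ₀ : ψ₀ ≠ 1) :
    Function.Injective (fun c : Kˣ => AddChar.mulShift ψ₀ (c : K)) := by
  intro c d h
  have := AddChar.to_mulShift_inj_of_isPrimitive (AddChar.IsPrimitive.of_ne_one hψ₀) h
  exact Units.ext this

lemma image_mulShift {ψ₀ : AddChar K ℂ} (hψ₀ : ψ₀ ≠ 1) :
    (Finset.univ : Finset Kˣ).image (fun c : Kˣ => AddChar.mulShift ψ₀ (c : K))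
      = Finset.univ.filter (fun ψ : AddChar K ℂ => ψ ≠ 1) := by
  apply Finset.eq_of_subset_of_card_le
  · intro ψ hψ
    obtain ⟨c, _, rfl⟩ := Finset.mem_image.mp hψ
    exact Finset.mem_filter.mpr ⟨Finset.mem_univ _,
      AddChar.IsPrimitive.of_ne_one hψ₀ (Units.ne_zero c)⟩
  · rw [Finset.card_image_of_injective _ (mulShift_units_injective hψ₀)]
    have h1 : (Finset.univ.filter (fun ψ : AddChar K ℂ => ψ ≠ 1)) = Finset.univ.erase 1 :=
      Finset.filter_ne' _ _
    rw [h1, Finset.card_erase_of_mem (Finset.mem_univ _), Finset.card_univ, Finset.card_univ,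
      AddChar.card_eq, Fintype.card_units]

end PsiEnum

section MapSum

lemma addChar_map_sum {K M : Type*} [AddCommMonoid K] [CommMonoid M] {ι : Type*}
    (ψ : AddChar K M) (s : Finset ι) (f : ι → K) :
    ψ (∑ i ∈ s, f i) = ∏ i ∈ s, ψ (f i) := by
  induction s using Finset.cons_induction with
  | empty => simpa using ψ.map_zero_eq_one
  | cons a s ha ih => rw [Finset.sum_cons, Finset.prod_cons, AddChar.map_add_eq_mul, ih]

end MapSum

section Gauss2

variable {K : Type*} [Field K] [Fintype K]

lemma gauss_shift' (ψ₀ : AddChar K ℂ) (χ : MulChar K ℂ) (c : Kˣ) (b : K) (hb : b ≠ 0) :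
    ∑ t : Kˣ, χ (t : K) * ψ₀ ((c : K) * (b * (t : K)))
      = (χ b)⁻¹ * ((χ (c : K))⁻¹ * ∑ u : K, χ u * ψ₀ u) := by
  have h := gauss_shift ψ₀ χ c (Units.mk0 b hb)
  simpa using h

end Gauss2


section PerC

variable {K : Type*} [Field K] [Fintype K]

lemma coe_monomialMap (s r : ℕ) (m : Fin s → Fin r → ℕ) (x : Fin s → Kˣ) (i : Fin r) :
    ((monomialMap K s r m x i : Kˣ) : K) = ∏ j, ((x j : K)) ^ m j i := by
  show ((Units.coeHom K) (∏ j, x j ^ m j i)) = _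
  rw [map_prod]
  exact Finset.prod_congr rfl fun j _ => by simp

lemma per_c (s r : ℕ) (m : Fin s → Fin r → ℕ)
    (a : Fin r → K) (ha : ∀ i, a i ≠ 0) (ψ₀ : AddChar K ℂ) (c : Kˣ) :
    ((Finset.univ.filter (fun χs : Fin r → MulChar K ℂ =>
        ∀ x : Fin s → Kˣ, ∏ i, χs i ((monomialMap K s r m x i : Kˣ) : K) = 1)).card : ℂ)
      * ∑ x : Fin s → Kˣ,
          (AddChar.mulShift ψ₀ (c : K)) (∑ i, a i * ∏ j, ((x j : K)) ^ m j i)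
    = ((Finset.univ.filter (fun x : Fin s → Kˣ => monomialMap K s r m x = 1)).card : ℂ)
      * ∑ χs ∈ Finset.univ.filter (fun χs : Fin r → MulChar K ℂ =>
          ∀ x : Fin s → Kˣ, ∏ i, χs i ((monomialMap K s r m x i : Kˣ) : K) = 1),
        (∏ i, (χs i (a i))⁻¹) * (∏ i, (χs i ((c : K)))⁻¹) * (∏ i, ∑ t : K, χs i t * ψ₀ t) := by
  set φ := monomialMap K s r m with hφ
  set ψc := AddChar.mulShift ψ₀ (c : K) with hψc
  set g : (Fin r → Kˣ) → ℂ := fun y => ψc (∑ i, a i * ((y i : Kˣ) : K)) with hg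
  have harg : ∀ x : Fin s → Kˣ,
      ψc (∑ i, a i * ∏ j, ((x j : K)) ^ m j i) = g (φ x) := by
    intro x
    rw [hg]
    congr 1
    exact Finset.sum_congr rfl fun i _ => by rw [coe_monomialMap]
  rw [Finset.sum_congr rfl fun x _ => harg x]
  rw [sum_comp_fiber φ g]
  rw [nsmul_eq_mul]
  -- inner evaluation for each χs
  have hinner : ∀ χs : Fin r → MulChar K ℂ,
      ∑ y : Fin r → Kˣ, (∏ i, χs i ((y i : Kˣ) : K)) * g y
        = (∏ i, (χs i (a i))⁻¹) * (∏ i, (χs i ((c : K)))⁻¹)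
            * (∏ i, ∑ t : K, χs i t * ψ₀ t) := by
    intro χs
    have hterm : ∀ y : Fin r → Kˣ,
        (∏ i, χs i ((y i : Kˣ) : K)) * g y
          = ∏ i, (χs i ((y i : Kˣ) : K) * ψ₀ ((c : K) * (a i * ((y i : Kˣ) : K)))) := by
      intro y
      rw [hg]
      simp only
      rw [addChar_map_sum ψc Finset.univ (fun i => a i * ((y i : Kˣ) : K))]
      rw [← Finset.prod_mul_distrib]
      exact Finset.prod_congr rfl fun i _ => by rw [hψc, AddChar.mulShift_apply]
    rw [Finset.sum_congr rfl fun y _ => hterm y]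
    have hps := Finset.prod_univ_sum (fun _ : Fin r => (Finset.univ : Finset Kˣ))
      (fun i t => χs i ((t : Kˣ) : K) * ψ₀ ((c : K) * (a i * ((t : Kˣ) : K))))
    rw [Fintype.piFinset_univ] at hps
    rw [← hps]
    rw [Finset.prod_congr rfl fun i _ => gauss_shift' ψ₀ (χs i) c (a i) (ha i)]
    rw [Finset.prod_mul_distrib, Finset.prod_mul_distrib]
    ring
  -- the middle identity
  have hmid : ((Finset.univ.filter (fun χs : Fin r → MulChar K ℂ =>
        ∀ x : Fin s → Kˣ, ∏ i, χs i ((φ x i : Kˣ) : K) = 1)).card : ℂ)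
      * ∑ b ∈ Finset.univ.image ⇑φ, g b
      = ∑ χs ∈ Finset.univ.filter (fun χs : Fin r → MulChar K ℂ =>
          ∀ x : Fin s → Kˣ, ∏ i, χs i ((φ x i : Kˣ) : K) = 1),
        ∑ y : Fin r → Kˣ, (∏ i, χs i ((y i : Kˣ) : K)) * g y := by
    rw [Finset.sum_comm]
    have hy : ∀ y : Fin r → Kˣ,
        ∑ χs ∈ Finset.univ.filter (fun χs : Fin r → MulChar K ℂ =>
          ∀ x : Fin s → Kˣ, ∏ i, χs i ((φ x i : Kˣ) : K) = 1),
          (∏ i, χs i ((y i : Kˣ) : K)) * g y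
        = (if y ∈ Finset.univ.image ⇑φ then
            (((Finset.univ.filter (fun χs : Fin r → MulChar K ℂ =>
              ∀ x : Fin s → Kˣ, ∏ i, χs i ((φ x i : Kˣ) : K) = 1)).card : ℕ) : ℂ) else 0)
            * g y := by
      intro y
      rw [← Finset.sum_mul, ann_sum φ y]
    rw [Finset.sum_congr rfl fun y _ => hy y]
    simp only [ite_mul, zero_mul]
    rw [← Finset.sum_filter, Finset.filter_univ_mem, Finset.mul_sum]
  have h9 := congrArg
    (fun z => ((Finset.univ.filter (fun x : Fin s → Kˣ => φ x = 1)).card : ℂ) * z)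
    (hmid.trans (Finset.sum_congr rfl fun χs _ => hinner χs))
  rw [← h9]
  ring

end PerC

/-- Delsarte §3, eq. (7): summing `∑_{x ∈ (K^×)^s} ψ(F(x))` over all nontrivial
additive characters `ψ` gives `(q-1)^{s-r+1} ∑_{χ ∈ G̃*} χ̄(a) 𝒢₀(χ)`. -/
theorem sum_Sbar_over_psi (K : Type*) [Field K] [Fintype K]
    (s r : ℕ) (m : Fin s → Fin r → ℕ)
    (hm : ∀ j i, ¬ (Fintype.card K - 1 ∣ m j i))
    (a : Fin r → K) (ha : ∀ i, a i ≠ 0)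
    (ψ₀ : AddChar K ℂ) (hψ₀ : ψ₀ ≠ 1) :
    ∑ ψ ∈ Finset.univ.filter (fun ψ : AddChar K ℂ => ψ ≠ 1),
        ∑ x : Fin s → Kˣ, ψ (∑ i, a i * ∏ j, (x j : K) ^ m j i)
      = ((Fintype.card K : ℂ) - 1) ^ ((s : ℤ) - (r : ℤ) + 1) *
          ∑ χs ∈ Finset.univ.filter (fun χs : Fin r → MulChar K ℂ =>
              (∀ x : Fin s → Kˣ,
                ∏ i, χs i ((monomialMap K s r m x i : Kˣ) : K) = 1)
              ∧ ∏ i, χs i = 1),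
            (∏ i, (χs i (a i))⁻¹) * ∏ i, ∑ t : K, χs i t * ψ₀ t := by
  classical
  -- abbreviations
  set w : ℂ := (Fintype.card K : ℂ) - 1 with hwdef
  have hq2 : 1 < Fintype.card K := Fintype.one_lt_card
  have hw : w = ((Fintype.card K - 1 : ℕ) : ℂ) := by
    rw [hwdef, Nat.cast_sub hq2.le, Nat.cast_one]
  have hwne : w ≠ 0 := by
    rw [hw]
    exact_mod_cast Nat.sub_ne_zero_of_lt hq2
  -- enumerate nontrivial additive characters
  rw [← image_mulShift hψ₀,
    Finset.sum_image (fun c _ d _ h => mulShift_units_injective hψ₀ h)]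
  -- nonvanishing of the cardinality of the annihilator
  have hT0 : (((Finset.univ.filter (fun χs : Fin r → MulChar K ℂ =>
      ∀ x : Fin s → Kˣ, ∏ i, χs i ((monomialMap K s r m x i : Kˣ) : K) = 1)).card : ℕ) : ℂ)
      ≠ 0 := by
    have hne : (Finset.univ.filter (fun χs : Fin r → MulChar K ℂ =>
        ∀ x : Fin s → Kˣ, ∏ i, χs i ((monomialMap K s r m x i : Kˣ) : K) = 1)).Nonempty := by
      refine ⟨fun _ => 1, Finset.mem_filter.mpr ⟨Finset.mem_univ _, fun x => ?_⟩⟩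
      exact Finset.prod_eq_one fun i _ => MulChar.one_apply_coe _
    exact_mod_cast Finset.card_ne_zero_of_mem hne.choose_spec
  refine mul_left_cancel₀ hT0 ?_
  rw [Finset.mul_sum]
  rw [Finset.sum_congr rfl fun c _ => per_c s r m a ha ψ₀ c]
  rw [← Finset.mul_sum]
  rw [Finset.sum_comm]
  -- sum over c for fixed χs
  have hc : ∀ χs : Fin r → MulChar K ℂ,
      ∑ c : Kˣ, (∏ i, (χs i (a i))⁻¹) * (∏ i, (χs i ((c : K)))⁻¹)
          * (∏ i, ∑ t : K, χs i t * ψ₀ t)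
        = ((∏ i, (χs i (a i))⁻¹) * (∏ i, ∑ t : K, χs i t * ψ₀ t))
            * (if (∏ i, χs i) = 1 then w else 0) := by
    intro χs
    have hterm : ∀ c : Kˣ,
        (∏ i, (χs i (a i))⁻¹) * (∏ i, (χs i ((c : K)))⁻¹) * (∏ i, ∑ t : K, χs i t * ψ₀ t)
          = ((∏ i, (χs i (a i))⁻¹) * (∏ i, ∑ t : K, χs i t * ψ₀ t))
              * (((∏ i, χs i) ((c : K)))⁻¹) := by
      intro c
      rw [mulChar_prod_apply Finset.univ χs c, ← Finset.prod_inv_distrib]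
      ring
    rw [Finset.sum_congr rfl fun c _ => hterm c, ← Finset.mul_sum, sum_inv_eval]
  rw [Finset.sum_congr rfl fun χs _ => hc χs]
  simp only [mul_ite, mul_zero]
  rw [← Finset.sum_filter, Finset.filter_filter]
  rw [← Finset.sum_mul]
  -- counting
  have hcardA : Fintype.card (Fin s → Kˣ) = (Fintype.card K - 1) ^ s := by
    rw [Fintype.card_pi]
    simp [Fintype.card_units]
  have hcardB : Fintype.card (Fin r → Kˣ) = (Fintype.card K - 1) ^ r := by
    rw [Fintype.card_pi]
    simp [Fintype.card_units]
  have h1 : ((Finset.univ.image ⇑(monomialMap K s r m)).card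
        * (Finset.univ.filter (fun x : Fin s → Kˣ => monomialMap K s r m x = 1)).card : ℕ)
      = (Fintype.card K - 1) ^ s := by
    rw [card_image_mul_fiber (monomialMap K s r m)]
    exact hcardA
  have h2 : ((Finset.univ.filter (fun χs : Fin r → MulChar K ℂ =>
        ∀ x : Fin s → Kˣ, ∏ i, χs i ((monomialMap K s r m x i : Kˣ) : K) = 1)).card
        * (Finset.univ.image ⇑(monomialMap K s r m)).card : ℕ)
      = (Fintype.card K - 1) ^ r := by
    rw [ann_card (monomialMap K s r m), quotient_card_mul (monomialMap K s r m)]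
    exact hcardB
  have himgne : (((Finset.univ.image ⇑(monomialMap K s r m)).card : ℕ) : ℂ) ≠ 0 := by
    have : (Finset.univ.image ⇑(monomialMap K s r m)).Nonempty :=
      Finset.Nonempty.image Finset.univ_nonempty _
    exact_mod_cast Finset.card_ne_zero_of_mem this.choose_spec
  have h1C : ((Finset.univ.image ⇑(monomialMap K s r m)).card : ℂ)
      * ((Finset.univ.filter (fun x : Fin s → Kˣ => monomialMap K s r m x = 1)).card : ℂ)
      = w ^ s := by
    rw [hw, ← Nat.cast_pow, ← h1, Nat.cast_mul]
  have h2C : ((Finset.univ.filter (fun χs : Fin r → MulChar K ℂ =>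
        ∀ x : Fin s → Kˣ, ∏ i, χs i ((monomialMap K s r m x i : Kˣ) : K) = 1)).card : ℂ)
      * ((Finset.univ.image ⇑(monomialMap K s r m)).card : ℂ)
      = w ^ r := by
    rw [hw, ← Nat.cast_pow, ← h2, Nat.cast_mul]
  have hkey : ((Finset.univ.filter (fun x : Fin s → Kˣ => monomialMap K s r m x = 1)).card : ℂ)
      * w
      = ((Finset.univ.filter (fun χs : Fin r → MulChar K ℂ =>
          ∀ x : Fin s → Kˣ, ∏ i, χs i ((monomialMap K s r m x i : Kˣ) : K) = 1)).card : ℂ)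
        * w ^ ((s : ℤ) - (r : ℤ) + 1) := by
    refine mul_left_cancel₀ himgne ?_
    have e2 : w ^ ((s : ℤ) - (r : ℤ) + 1) * w ^ (r : ℤ) = w ^ (s : ℕ) * w := by
      rw [← zpow_add₀ hwne]
      have : (s : ℤ) - (r : ℤ) + 1 + (r : ℤ) = (s : ℤ) + 1 := by ring
      rw [this, zpow_add₀ hwne, zpow_one, zpow_natCast]
    have e3 : w ^ (r : ℤ) = w ^ (r : ℕ) := zpow_natCast w r
    calc ((Finset.univ.image ⇑(monomialMap K s r m)).card : ℂ)
        * (((Finset.univ.filter (fun x : Fin s → Kˣ => monomialMap K s r m x = 1)).card : ℂ) * w)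
        = (((Finset.univ.image ⇑(monomialMap K s r m)).card : ℂ)
            * ((Finset.univ.filter (fun x : Fin s → Kˣ => monomialMap K s r m x = 1)).card : ℂ))
            * w := by ring
      _ = w ^ (s : ℕ) * w := by rw [h1C]
      _ = w ^ ((s : ℤ) - (r : ℤ) + 1) * w ^ (r : ℕ) := by rw [← e2, e3]
      _ = w ^ ((s : ℤ) - (r : ℤ) + 1)
            * (((Finset.univ.filter (fun χs : Fin r → MulChar K ℂ =>
              ∀ x : Fin s → Kˣ, ∏ i, χs i ((monomialMap K s r m x i : Kˣ) : K) = 1)).card : ℂ)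
              * ((Finset.univ.image ⇑(monomialMap K s r m)).card : ℂ)) := by rw [h2C]
      _ = _ := by ring
  linear_combination
    (∑ χs ∈ Finset.univ.filter (fun χs : Fin r → MulChar K ℂ =>
        (∀ x : Fin s → Kˣ, ∏ i, χs i ((monomialMap K s r m x i : Kˣ) : K) = 1)
        ∧ ∏ i, χs i = 1),
      (∏ i, (χs i (a i))⁻¹) * ∏ i, ∑ t : K, χs i t * ψ₀ t) * hkey
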